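/- For every positive integer m, imph(m) = m·∏_{p | m, p prime} (1 − 2/p); equivalently, imph(m) · ∏_{p ∈ primeFactors(m)} p = m · ∏_{p ∈ primeFactors(m)} (p − 2), where the products range over the distinct prime divisors of m. -/

import Mathlib

open Finset

/-- `imph n` is the number of `x` with `1 ≤ x ≤ n` such that both `x - 1` and `x`
are coprime to `n`. -/
def imph (n : ℕ) : ℕ :=
  ((Finset.Icc 1 n).filter (fun x => Nat.gcd (x - 1) n = 1 ∧ Nat.gcd x n = 1)).card

private lemma isUnit_prod_iff {M N : Type*} [Monoid M] [Monoid N] (y : M × N) :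
    IsUnit y ↔ IsUnit y.1 ∧ IsUnit y.2 := by
  constructor
  · rintro ⟨u, rfl⟩
    exact ⟨⟨Units.map (MonoidHom.fst M N) u, rfl⟩, ⟨Units.map (MonoidHom.snd M N) u, rfl⟩⟩
  · rintro ⟨⟨u, hu⟩, ⟨v, hv⟩⟩
    refine ⟨MulEquiv.prodUnits.symm (u, v), ?_⟩
    simp only [MulEquiv.prodUnits, MulEquiv.symm_mk, MulEquiv.coe_mk, Equiv.coe_fn_symm_mk]
    rw [hu, hv]

private lemma isUnit_mulEquiv_iff {M N : Type*} [Monoid M] [Monoid N] (e : M ≃* N) (x : M) :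
    IsUnit (e x) ↔ IsUnit x :=
  ⟨fun h => by simpa using h.map e.symm.toMonoidHom, fun h => h.map e.toMonoidHom⟩

/-- `imph n` counts residues `x` mod `n` with `x` and `x - 1` both units. -/
private lemma imph_eq_card (n : ℕ) (hn : 0 < n) :
    imph n = Nat.card {x : ZMod n // IsUnit x ∧ IsUnit (x - 1)} := by
  haveI : NeZero n := ⟨hn.ne'⟩
  classical
  rw [Nat.card_eq_fintype_card, Fintype.card_subtype]
  unfold imph
  refine Finset.card_nbij' (fun y : ℕ => (y : ZMod n))
    (fun z => if z.val = 0 then n else z.val) ?_ ?_ ?_ ?_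
  · intro y hy
    simp only [Finset.mem_coe, mem_filter, mem_Icc, mem_univ, true_and] at hy ⊢
    obtain ⟨⟨h1, h2⟩, hg1, hg2⟩ := hy
    constructor
    · exact (ZMod.isUnit_iff_coprime y n).mpr hg2
    · have : ((y - 1 : ℕ) : ZMod n) = (y : ZMod n) - 1 := by
        push_cast [Nat.cast_sub h1]; ring
      rw [← this]
      exact (ZMod.isUnit_iff_coprime (y - 1) n).mpr hg1
  · intro z hz
    simp only [Finset.mem_coe, mem_filter, mem_univ, true_and] at hz
    obtain ⟨hu1, hu2⟩ := hz
    have hcast : (((if z.val = 0 then n else z.val) : ℕ) : ZMod n) = z := by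
      split_ifs with h
      · rw [ZMod.natCast_self]
        exact ((ZMod.val_eq_zero z).mp h).symm
      · exact ZMod.natCast_rightInverse z
    have hge : 1 ≤ (if z.val = 0 then n else z.val) := by
      split_ifs with h
      · exact hn
      · omega
    simp only [Finset.mem_coe, mem_filter, mem_Icc]
    refine ⟨⟨hge, ?_⟩, ?_, ?_⟩
    · split_ifs with h
      · exact le_rfl
      · exact (ZMod.val_lt z).le
    · have : (((if z.val = 0 then n else z.val) - 1 : ℕ) : ZMod n) = z - 1 := by
        rw [Nat.cast_sub hge, hcast, Nat.cast_one]
      refine (ZMod.isUnit_iff_coprime _ n).mp ?_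
      rw [this]; exact hu2
    · refine (ZMod.isUnit_iff_coprime _ n).mp ?_
      rw [hcast]; exact hu1
  · intro y hy
    simp only [Finset.mem_coe, mem_filter, mem_Icc] at hy
    obtain ⟨⟨h1, h2⟩, -, -⟩ := hy
    simp only []
    rcases eq_or_lt_of_le h2 with rfl | hlt
    · simp [ZMod.natCast_self]
    · rw [ZMod.val_cast_of_lt hlt]
      have : y ≠ 0 := by omega
      simp [this]
  · intro z hz
    simp only []
    split_ifs with h
    · rw [ZMod.natCast_self]
      exact ((ZMod.val_eq_zero z).mp h).symm
    · exact ZMod.natCast_rightInverse z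

private lemma imph_mul (a b : ℕ) (hab : Nat.Coprime a b) :
    imph (a * b) = imph a * imph b := by
  rcases Nat.eq_zero_or_pos a with rfl | ha
  · simp [imph]
  rcases Nat.eq_zero_or_pos b with rfl | hb
  · simp [imph]
  rw [imph_eq_card a ha, imph_eq_card b hb, imph_eq_card (a * b) (Nat.mul_pos ha hb)]
  haveI : NeZero a := ⟨ha.ne'⟩
  haveI : NeZero b := ⟨hb.ne'⟩
  haveI : NeZero (a * b) := ⟨(Nat.mul_pos ha hb).ne'⟩
  let e : ZMod (a * b) ≃+* ZMod a × ZMod b := ZMod.chineseRemainder hab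
  rw [← Nat.card_prod]
  apply Nat.card_congr
  refine (e.toEquiv.subtypeEquiv fun x => ?_).trans (Equiv.subtypeProdEquivProd)
  have h1 : IsUnit (e x) ↔ IsUnit x := isUnit_mulEquiv_iff e.toMulEquiv x
  have h2 : IsUnit (e x - 1) ↔ IsUnit (x - 1) := by
    rw [show e x - 1 = e (x - 1) by rw [map_sub, map_one]]
    exact isUnit_mulEquiv_iff e.toMulEquiv (x - 1)
  have key : ∀ y : ZMod a × ZMod b, (IsUnit y ∧ IsUnit (y - 1)) ↔
      ((IsUnit y.1 ∧ IsUnit (y.1 - 1)) ∧ (IsUnit y.2 ∧ IsUnit (y.2 - 1))) := by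
    intro y
    have e1 : (y - 1).1 = y.1 - 1 := rfl
    have e2 : (y - 1).2 = y.2 - 1 := rfl
    rw [isUnit_prod_iff y, isUnit_prod_iff (y - 1), e1, e2]
    tauto
  rw [← h1, ← h2]
  exact key (e x)

private lemma card_range_filter_mod (d p r : ℕ) (hp : 0 < p) (hr : r < p) :
    ((Finset.range (d * p)).filter (fun x => x % p = r)).card = d := by
  conv_rhs => rw [← Finset.card_range d]
  symm
  apply Finset.card_nbij' (fun i => i * p + r) (fun x => x / p)
  · intro a ha
    simp only [Finset.mem_coe, mem_range, mem_filter] at ha ⊢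
    constructor
    · calc a * p + r < a * p + p := by omega
        _ = (a + 1) * p := by ring
        _ ≤ d * p := Nat.mul_le_mul_right p ha
    · rw [add_comm, Nat.add_mul_mod_self_right, Nat.mod_eq_of_lt hr]
  · intro x hx
    simp only [Finset.mem_coe, mem_range, mem_filter] at hx ⊢
    exact (Nat.div_lt_iff_lt_mul hp).mpr hx.1
  · intro a _
    show (a * p + r) / p = a
    rw [show a * p + r = p * a + r by ring, Nat.mul_add_div hp, Nat.div_eq_of_lt hr, add_zero]
  · intro x hx
    simp only [Finset.mem_coe, mem_range, mem_filter] at hx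
    have := Nat.div_add_mod x p
    have h2 := Nat.mul_comm (x / p) p
    show x / p * p + r = x
    omega

private lemma card_range_filter_mod_mem (d p : ℕ) (S : Finset ℕ) (hp : 0 < p)
    (hS : S ⊆ Finset.range p) :
    ((Finset.range (d * p)).filter (fun x => x % p ∈ S)).card = S.card * d := by
  classical
  rw [Finset.card_eq_sum_card_fiberwise
    (s := (Finset.range (d * p)).filter (fun x => x % p ∈ S)) (f := fun x => x % p) (t := S)
    (fun x hx => (Finset.mem_filter.mp (Finset.mem_coe.mp hx)).2)]
  rw [Finset.sum_congr rfl (fun r hr => ?_), Finset.sum_const, smul_eq_mul]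
  rw [Finset.filter_filter]
  have : ((Finset.range (d * p)).filter fun x => x % p ∈ S ∧ x % p = r) =
      (Finset.range (d * p)).filter fun x => x % p = r := by
    apply Finset.filter_congr
    intro x _
    constructor
    · tauto
    · intro h; exact ⟨h ▸ hr, h⟩
  rw [this]
  exact card_range_filter_mod d p r hp (Finset.mem_range.mp (hS hr))

private lemma succ_mod_eq_zero_iff (p x : ℕ) (hp : 1 < p) :
    (x + 1) % p = 0 ↔ x % p = p - 1 := by
  have h1 : x % p < p := Nat.mod_lt _ (by omega)
  rw [Nat.add_mod, Nat.one_mod_eq_one.mpr (by omega)]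
  constructor
  · intro h
    by_contra hne
    have hlt : x % p + 1 < p := by omega
    rw [Nat.mod_eq_of_lt hlt] at h
    omega
  · intro h
    rw [h, Nat.sub_add_cancel (by omega : 1 ≤ p), Nat.mod_self]

private lemma imph_prime_pow (p k : ℕ) (hp : p.Prime) (hk : 0 < k) :
    imph (p ^ k) = p ^ (k - 1) * (p - 2) := by
  have hp2 : 2 ≤ p := hp.two_le
  have hpk : p ^ (k - 1) * p = p ^ k := by
    rw [← pow_succ]
    congr 1
    omega
  set S : Finset ℕ := Finset.Ioo 0 (p - 1) with hS
  have hScard : S.card = p - 2 := by rw [hS, Nat.card_Ioo]; omega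
  have hSsub : S ⊆ Finset.range p := by
    intro r hr
    simp only [hS, mem_Ioo] at hr
    exact mem_range.mpr (by omega)
  have key : ((Finset.range (p ^ (k - 1) * p)).filter (fun x => x % p ∈ S)).card
      = S.card * p ^ (k - 1) := card_range_filter_mod_mem _ _ _ (by omega) hSsub
  have hco : ∀ m : ℕ, Nat.gcd m (p ^ k) = 1 ↔ ¬ p ∣ m := by
    intro m
    have h1 : Nat.Coprime m (p ^ k) ↔ Nat.Coprime m p := Nat.coprime_pow_right_iff hk m p
    rw [show (Nat.gcd m (p ^ k) = 1) = (Nat.Coprime m (p ^ k)) from rfl, h1,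
      Nat.coprime_comm, hp.coprime_iff_not_dvd]
  unfold imph
  rw [show p ^ (k - 1) * (p - 2) = S.card * p ^ (k - 1) by rw [hScard, Nat.mul_comm], ← key]
  refine Finset.card_nbij' (fun y => y - 1) (fun x => x + 1) ?_ ?_ ?_ ?_
  · intro y hy
    simp only [Finset.mem_coe, mem_filter, mem_Icc, mem_range, hS, mem_Ioo] at hy ⊢
    obtain ⟨⟨hy1, hy2⟩, hg1, hg2⟩ := hy
    have hd1 : ¬ p ∣ (y - 1) := (hco _).mp hg1
    have hd2 : ¬ p ∣ y := (hco _).mp hg2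
    rw [Nat.dvd_iff_mod_eq_zero] at hd1 hd2
    have hm : (y - 1) % p < p := Nat.mod_lt _ (by omega)
    have hne : (y - 1) % p ≠ p - 1 := by
      intro h
      have : (y - 1 + 1) % p = 0 := (succ_mod_eq_zero_iff p (y - 1) (by omega)).mpr h
      rw [Nat.sub_add_cancel hy1] at this
      exact hd2 this
    exact ⟨by omega, by omega, by omega⟩
  · intro x hx
    simp only [Finset.mem_coe, mem_filter, mem_Icc, mem_range, hS, mem_Ioo] at hx ⊢
    obtain ⟨hxlt, hx1, hx2⟩ := hx
    have hm : x % p < p := Nat.mod_lt _ (by omega)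
    refine ⟨⟨by omega, by omega⟩, ?_, ?_⟩
    · rw [hco, Nat.dvd_iff_mod_eq_zero]
      simpa using (by omega : x % p ≠ 0)
    · rw [hco, Nat.dvd_iff_mod_eq_zero]
      intro h
      rw [succ_mod_eq_zero_iff p x (by omega)] at h
      omega
  · intro y hy
    simp only [Finset.mem_coe, mem_filter, mem_Icc] at hy
    show y - 1 + 1 = y
    omega
  · intro x _
    show x + 1 - 1 = x
    omega

private lemma imph_one : imph 1 = 1 := by decide

/-- `imph m = m * ∏_{p ∣ m prime} (1 - 2/p)`, stated multiplied out over the distinct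
prime divisors of `m`. -/
theorem imph_formula (m : ℕ) (hm : 0 < m) :
    imph m * ∏ p ∈ m.primeFactors, p = m * ∏ p ∈ m.primeFactors, (p - 2) := by
  have h1 : imph m = ∏ p ∈ m.primeFactors, p ^ (m.factorization p - 1) * (p - 2) := by
    rw [Nat.multiplicative_factorization imph imph_mul imph_one hm.ne',
      Finsupp.prod, Nat.support_factorization]
    refine Finset.prod_congr rfl fun p hp => ?_
    obtain ⟨hpp, hdvd, -⟩ := Nat.mem_primeFactors.mp hp
    exact imph_prime_pow p _ hpp (hpp.factorization_pos_of_dvd hm.ne' hdvd)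
  have h2 : m = ∏ p ∈ m.primeFactors, p ^ m.factorization p := by
    conv_lhs => rw [← Nat.factorization_prod_pow_eq_self hm.ne']
    rw [Finsupp.prod, Nat.support_factorization]
  have key : ∏ p ∈ m.primeFactors, (p ^ (m.factorization p - 1) * (p - 2) * p) =
      ∏ p ∈ m.primeFactors, (p ^ m.factorization p * (p - 2)) := by
    refine Finset.prod_congr rfl fun p hp => ?_
    obtain ⟨hpp, hdvd, -⟩ := Nat.mem_primeFactors.mp hp
    have he : 0 < m.factorization p := hpp.factorization_pos_of_dvd hm.ne' hdvd
    have hpe : p ^ (m.factorization p - 1) * p = p ^ m.factorization p := by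
      rw [← pow_succ]
      congr 1
      omega
    calc p ^ (m.factorization p - 1) * (p - 2) * p
        = p ^ (m.factorization p - 1) * p * (p - 2) := by ring
      _ = p ^ m.factorization p * (p - 2) := by rw [hpe]
  rw [h1, ← Finset.prod_mul_distrib, key, Finset.prod_mul_distrib, ← h2]
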